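/- Let G be a directed acyclic graph on V = Fin n, let Λ be any real n×n matrix supported on the arrows of G, let Φ be any diagonal n×n matrix with positive diagonal entries, and let Σ = (I − Λ)⁻ᵀ Φ (I − Λ)⁻¹. Then for all subsets A, B ⊆ V, the rank of the submatrix Σ[A, B] is at most the minimum of |L| + |R| over all pairs of vertex sets (L, R) that t-separate A and B in G. -/

import Mathlib

open Classical Matrix

/-- A trek in a directed graph given by the arrow relation `E`: a pair of
directed paths (nonempty lists of vertices) from a common top vertex. -/
structure DTrek {n : ℕ} (E : Fin n → Fin n → Prop) where
  left : List (Fin n)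
  right : List (Fin n)
  left_ne : left ≠ []
  right_ne : right ≠ []
  left_chain : left.Chain' E
  right_chain : right.Chain' E
  top_eq : left.head left_ne = right.head right_ne

namespace DTrek

variable {n : ℕ} {E : Fin n → Fin n → Prop}

/-- The top of a trek. -/
def top (t : DTrek E) : Fin n := t.left.head t.left_ne

/-- The left endpoint of a trek. -/
def src (t : DTrek E) : Fin n := t.left.getLast t.left_ne

/-- The right endpoint of a trek. -/
def dst (t : DTrek E) : Fin n := t.right.getLast t.right_ne

end DTrek

/-- `(L, R)` t-separates the vertex sets `A` and `B` in the directed graph `E`: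
every trek from `A` to `B` has a vertex of `L` on its left side or a vertex of
`R` on its right side. -/
def DTSep {n : ℕ} (E : Fin n → Fin n → Prop) (L R : Finset (Fin n))
    (A B : Set (Fin n)) : Prop :=
  ∀ t : DTrek E, t.src ∈ A → t.dst ∈ B →
    (∃ v ∈ L, v ∈ t.left) ∨ (∃ v ∈ R, v ∈ t.right)

/-- The directed graph `E` is acyclic. -/
def EAcyclic {n : ℕ} (E : Fin n → Fin n → Prop) : Prop :=
  ∀ v, ¬ Relation.TransGen E v v

/-- `Λ` is supported on the arrows of `E`. -/
def SupportedOn {n : ℕ} (E : Fin n → Fin n → Prop)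
    (Λ : Matrix (Fin n) (Fin n) ℝ) : Prop :=
  ∀ u v, ¬ E u v → Λ u v = 0

/-- The implied covariance matrix `Σ = (I − Λ)⁻ᵀ Φ (I − Λ)⁻¹` of an SEM. -/
noncomputable def impliedCov {n : ℕ} (Λ Φ : Matrix (Fin n) (Fin n) ℝ) :
    Matrix (Fin n) (Fin n) ℝ :=
  ((1 - Λ)⁻¹)ᵀ * Φ * (1 - Λ)⁻¹

/-- The covariance of variable `i` with the composite error
`ε = Σ_{p ∈ Pa(y)\X} Λ[p,y]·x_p + ε_y` of the equation of `y`: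
`Σ_{p ∈ Pa(y)\X} Λ[p,y]·Σ[i,p] + ((I − Λ)⁻ᵀΦ)[i,y]`. -/
noncomputable def errorCov {n : ℕ} (E : Fin n → Fin n → Prop)
    (Λ Φ : Matrix (Fin n) (Fin n) ℝ) (y : Fin n) (X : Finset (Fin n))
    (i : Fin n) : ℝ :=
  (∑ p ∈ Finset.univ.filter (fun p => E p y ∧ p ∉ X),
      Λ p y * impliedCov Λ Φ i p)
    + ((((1 - Λ)⁻¹)ᵀ * Φ : Matrix (Fin n) (Fin n) ℝ)) i y

/-!
Write `P = (I − Λ)⁻¹`, so that `P[t, a]` sums the weights of the directed paths from `t`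
to `a`, and let `Q_S` be the analogous sum over the paths that avoid `S` entirely.
Splitting a path into `a` at its last visit to `L` gives `P = Q_L + P J_L P_L`, where `J_L`
is the coordinate projection onto `L` and `P_L = (I − Λ J_{Lᶜ})⁻¹`; similarly for `R`.
Substituting both into `Σ = Pᵀ Φ P` yields `Σ = Q_Lᵀ Φ Q_R + (· J_L ·) + (· J_R ·)`.
As `Φ` is diagonal, the entry `(a, b)` of `Q_Lᵀ Φ Q_R` is a sum over treks from `a` to `b`
whose left side avoids `L` and whose right side avoids `R`; t-separation leaves no such
trek, so this term vanishes on `A × B`, and the two remaining terms have rank at most `|L|`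
and `|R|`.
-/

open Finset Relation

theorem List.IsChain.nodup_of_acyclic {α : Type*} {r : α → α → Prop} {l : List α}
    (hr : ∀ a, ¬ TransGen r a a) (hl : l.IsChain r) : l.Nodup :=
  (List.isChain_iff_pairwise.1 (hl.imp fun _ _ => TransGen.single)).imp
    (S := (· ≠ ·)) fun h he => hr _ (he ▸ h)

namespace Matrix

variable {ι : Type*} [DecidableEq ι]

section Paths

variable [Fintype ι] {R : Type*} {r : ι → ι → Prop} {M : Matrix ι ι R}

theorem exists_isChain_of_pow_apply_ne_zero [Semiring R] (hM : ∀ u v, ¬ r u v → M u v = 0) :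
    ∀ {k : ℕ} {u v : ι}, (M ^ k) u v ≠ 0 →
      ∃ l : List ι, (u :: l).IsChain r ∧ l.length = k ∧
        (u :: l).getLast (List.cons_ne_nil u l) = v
  | 0, u, v, h => by
    obtain rfl : u = v := by
      by_contra huv
      exact h (by rw [pow_zero, one_apply_ne huv])
    exact ⟨[], List.isChain_singleton u, rfl, rfl⟩
  | k + 1, u, v, h => by
    rw [pow_succ', mul_apply] at h
    obtain ⟨w, -, hw⟩ := exists_ne_zero_of_sum_ne_zero h
    have huw : r u w := by_contra fun h' => hw (by rw [hM u w h', zero_mul])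
    obtain ⟨l, hl, hlen, hlast⟩ :=
      exists_isChain_of_pow_apply_ne_zero hM (right_ne_zero_of_mul hw)
    exact ⟨w :: l, List.isChain_cons_cons.2 ⟨huw, hl⟩, by simp [hlen],
      by rwa [List.getLast_cons]⟩

theorem pow_card_eq_zero_of_acyclic [Semiring R] (hr : ∀ a, ¬ TransGen r a a)
    (hM : ∀ u v, ¬ r u v → M u v = 0) : M ^ Fintype.card ι = 0 := by
  ext u v
  by_contra h
  obtain ⟨l, hl, hlen, -⟩ := exists_isChain_of_pow_apply_ne_zero hM h
  have := (hl.nodup_of_acyclic hr).length_le_card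
  simp only [List.length_cons, hlen] at this
  omega

theorem isNilpotent_of_acyclic [Semiring R] (hr : ∀ a, ¬ TransGen r a a)
    (hM : ∀ u v, ¬ r u v → M u v = 0) : IsNilpotent M :=
  ⟨_, pow_card_eq_zero_of_acyclic hr hM⟩

theorem inv_one_sub_eq_sum_range_pow [CommRing R] {N : ℕ} (hM : M ^ N = 0) :
    (1 - M)⁻¹ = ∑ i ∈ range N, M ^ i :=
  inv_eq_right_inv (by rw [mul_neg_geom_sum, hM, sub_zero])

theorem exists_isChain_of_inv_one_sub_apply_ne_zero [CommRing R] (hr : ∀ a, ¬ TransGen r a a)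
    (hM : ∀ u v, ¬ r u v → M u v = 0) {u v : ι} (h : (1 - M)⁻¹ u v ≠ 0) :
    ∃ l : List ι, (u :: l).IsChain r ∧ (u :: l).getLast (List.cons_ne_nil u l) = v := by
  rw [inv_one_sub_eq_sum_range_pow (pow_card_eq_zero_of_acyclic hr hM), sum_apply] at h
  obtain ⟨k, -, hk⟩ := exists_ne_zero_of_sum_ne_zero h
  obtain ⟨l, hl, -, hlast⟩ := exists_isChain_of_pow_apply_ne_zero hM hk
  exact ⟨l, hl, hlast⟩

end Paths

section DiagIndicator

variable {R : Type*}

def diagIndicator [Zero R] [One R] (S : Finset ι) : Matrix ι ι R :=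
  diagonal fun i => if i ∈ S then 1 else 0

variable (S : Finset ι)

theorem diagIndicator_add_diagIndicator_compl [Fintype ι] [AddMonoidWithOne R] :
    diagIndicator S + diagIndicator Sᶜ = (1 : Matrix ι ι R) := by
  rw [diagIndicator, diagIndicator, diagonal_add, ← diagonal_one]
  congr 1
  funext i
  by_cases hi : i ∈ S <;> simp [hi]

theorem transpose_diagIndicator [Zero R] [One R] :
    (diagIndicator S : Matrix ι ι R)ᵀ = diagIndicator S :=
  diagonal_transpose _

theorem diagIndicator_mul_apply [Fintype ι] [NonAssocSemiring R] (M : Matrix ι ι R) (i j : ι) :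
    ((diagIndicator S : Matrix ι ι R) * M) i j = if i ∈ S then M i j else 0 := by
  simp [diagIndicator, diagonal_mul]

theorem mul_diagIndicator_apply [Fintype ι] [NonAssocSemiring R] (M : Matrix ι ι R) (i j : ι) :
    (M * (diagIndicator S : Matrix ι ι R)) i j = if j ∈ S then M i j else 0 := by
  simp [diagIndicator, mul_diagonal]

theorem mul_diagIndicator_compl_apply_eq_zero [Fintype ι] [NonAssocSemiring R]
    {r : ι → ι → Prop} {M : Matrix ι ι R} (hM : ∀ u v, ¬ r u v → M u v = 0) (u v : ι)
    (h : ¬ (r u v ∧ v ∉ S)) : (M * (diagIndicator Sᶜ : Matrix ι ι R)) u v = 0 := by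
  rw [mul_diagIndicator_apply]
  split_ifs with hv
  · exact hM u v fun huv => h ⟨huv, mem_compl.1 hv⟩
  · rfl

theorem rank_mul_diagIndicator_mul_le {m n K : Type*} [Fintype ι] [Fintype n] [Field K]
    (X : Matrix m ι K) (Y : Matrix ι n K) :
    (X * (diagIndicator S : Matrix ι ι K) * Y).rank ≤ S.card := by
  classical
  calc (X * (diagIndicator S : Matrix ι ι K) * Y).rank
      ≤ (X * (diagIndicator S : Matrix ι ι K)).rank := rank_mul_le_left _ _
    _ ≤ (diagIndicator S : Matrix ι ι K).rank := rank_mul_le_right _ _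
    _ = S.card := by simp [diagIndicator, rank_diagonal]

end DiagIndicator

section AvoidingPaths

variable [Fintype ι] {R : Type*} [CommRing R]

/-- For `Λ` supported on an acyclic graph, the `(t, a)` entry is the sum of the weights of the
directed paths from `t` to `a` all of whose vertices lie outside `S`. -/
noncomputable def avoidingPathSum (Λ : Matrix ι ι R) (S : Finset ι) : Matrix ι ι R :=
  diagIndicator Sᶜ * (1 - Λ * diagIndicator Sᶜ)⁻¹

variable {r : ι → ι → Prop} {Λ : Matrix ι ι R}

theorem isUnit_one_sub_mul_diagIndicator_compl (hr : ∀ a, ¬ TransGen r a a)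
    (hΛ : ∀ u v, ¬ r u v → Λ u v = 0) (S : Finset ι) :
    IsUnit (1 - Λ * diagIndicator Sᶜ) :=
  (isNilpotent_of_acyclic hr fun u v h =>
    mul_diagIndicator_compl_apply_eq_zero S hΛ u v fun h' => h h'.1).isUnit_one_sub

theorem exists_isChain_of_avoidingPathSum_apply_ne_zero (hr : ∀ a, ¬ TransGen r a a)
    (hΛ : ∀ u v, ¬ r u v → Λ u v = 0) {S : Finset ι} {u v : ι}
    (h : avoidingPathSum Λ S u v ≠ 0) :
    ∃ l : List ι, (u :: l).IsChain r ∧ (u :: l).getLast (List.cons_ne_nil u l) = v ∧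
      ∀ x ∈ u :: l, x ∉ S := by
  rw [avoidingPathSum, diagIndicator_mul_apply] at h
  split_ifs at h with hu
  · have hr' : ∀ a, ¬ TransGen (fun a b => r a b ∧ b ∉ S) a a :=
      fun a ha => hr a (TransGen.mono (fun _ _ => And.left) a a ha)
    obtain ⟨l, hl, hlast⟩ := exists_isChain_of_inv_one_sub_apply_ne_zero hr'
      (mul_diagIndicator_compl_apply_eq_zero S hΛ) h
    exact ⟨l, hl.imp fun _ _ => And.left, hlast,
      hl.induction (· ∉ S) _ (fun _ _ h _ => h.2) fun _ => mem_compl.1 hu⟩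
  · exact absurd rfl h

/-- Last-exit decomposition: a path either avoids `S` or has a last vertex in `S`. -/
theorem inv_one_sub_eq_avoidingPathSum_add (S : Finset ι) (hΛ : IsUnit (1 - Λ))
    (hΛS : IsUnit (1 - Λ * diagIndicator Sᶜ)) :
    (1 - Λ)⁻¹ = avoidingPathSum Λ S
      + (1 - Λ)⁻¹ * diagIndicator S * (1 - Λ * diagIndicator Sᶜ)⁻¹ := by
  rw [avoidingPathSum]
  set P := (1 - Λ)⁻¹
  set Q := (1 - Λ * diagIndicator Sᶜ)⁻¹
  set J : Matrix ι ι R := diagIndicator S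
  have hD : diagIndicator Sᶜ = 1 - J :=
    eq_sub_of_add_eq' (diagIndicator_add_diagIndicator_compl S)
  have hP : P * (1 - Λ) = 1 := nonsing_inv_mul _ ((isUnit_iff_isUnit_det _).1 hΛ)
  have hQ : (1 - Λ * (1 - J)) * Q = 1 := by
    rw [← hD]; exact mul_nonsing_inv _ ((isUnit_iff_isUnit_det _).1 hΛS)
  have hPΛ : P * Λ = P - 1 := by
    calc P * Λ = P - P * (1 - Λ) := by noncomm_ring
      _ = P - 1 := by rw [hP]
  rw [hD]
  calc P = P * ((1 - Λ * (1 - J)) * Q) := by rw [hQ, mul_one]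
    _ = P * (1 - Λ) * Q + P * Λ * J * Q := by noncomm_ring
    _ = Q + (P - 1) * J * Q := by rw [hP, one_mul, hPΛ]
    _ = (1 - J) * Q + P * J * Q := by noncomm_ring

end AvoidingPaths

theorem rank_add_le {m n K : Type*} [Fintype n] [Field K] (A B : Matrix m n K) :
    (A + B).rank ≤ A.rank + B.rank := by
  rw [rank, rank, rank, mulVecLin_add]
  have hle : LinearMap.range (A.mulVecLin + B.mulVecLin) ≤
      LinearMap.range A.mulVecLin ⊔ LinearMap.range B.mulVecLin := by
    rintro _ ⟨y, rfl⟩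
    exact Submodule.mem_sup.2 ⟨A.mulVecLin y, ⟨y, rfl⟩, B.mulVecLin y, ⟨y, rfl⟩, rfl⟩
  exact (Submodule.finrank_mono hle).trans (Submodule.finrank_add_le_finrank_add_finrank _ _)

theorem rank_submatrix_le_card_add_card {m n α β K : Type*} [Fintype ι] [Fintype n]
    [Fintype β] [Field K] {M Z : Matrix m n K} {X₁ X₂ : Matrix m ι K}
    {Y₁ Y₂ : Matrix ι n K} {L R : Finset ι} (hM : M = Z + X₁ * (diagIndicator L : Matrix ι ι K) * Y₁
      + X₂ * (diagIndicator R : Matrix ι ι K) * Y₂)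
    {f : α → m} {g : β → n} (hZ : Z.submatrix f g = 0) :
    (M.submatrix f g).rank ≤ L.card + R.card := by
  set JL : Matrix ι ι K := diagIndicator L
  set JR : Matrix ι ι K := diagIndicator R
  calc (M.submatrix f g).rank
      = (Z.submatrix f g + (X₁ * JL * Y₁).submatrix f g
          + (X₂ * JR * Y₂).submatrix f g).rank := by
        rw [hM]; rfl
    _ = ((X₁ * JL * Y₁).submatrix f g + (X₂ * JR * Y₂).submatrix f g).rank := by
        rw [hZ, zero_add]
    _ ≤ (X₁ * JL * Y₁).rank + (X₂ * JR * Y₂).rank :=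
        (rank_add_le _ _).trans (add_le_add (rank_submatrix_le _ _ _) (rank_submatrix_le _ _ _))
    _ ≤ L.card + R.card :=
        add_le_add (rank_mul_diagIndicator_mul_le _ _ _) (rank_mul_diagIndicator_mul_le _ _ _)

end Matrix

theorem impliedCov_eq_avoidingPathSum_add {n : ℕ} {Λ Φ : Matrix (Fin n) (Fin n) ℝ}
    {L R : Finset (Fin n)} (hΛ : IsUnit (1 - Λ)) (hL : IsUnit (1 - Λ * diagIndicator Lᶜ))
    (hR : IsUnit (1 - Λ * diagIndicator Rᶜ)) :
    ∃ X₁ Y₁ X₂ Y₂ : Matrix (Fin n) (Fin n) ℝ, impliedCov Λ Φ =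
      (avoidingPathSum Λ L)ᵀ * Φ * avoidingPathSum Λ R
        + X₁ * diagIndicator L * Y₁ + X₂ * diagIndicator R * Y₂ := by
  have hsplitL := inv_one_sub_eq_avoidingPathSum_add L hΛ hL
  have hsplitR := inv_one_sub_eq_avoidingPathSum_add R hΛ hR
  set P := (1 - Λ)⁻¹
  set QL := avoidingPathSum Λ L
  set QR := avoidingPathSum Λ R
  set PL := (1 - Λ * diagIndicator Lᶜ)⁻¹
  set PR := (1 - Λ * diagIndicator Rᶜ)⁻¹
  have hPLt : Pᵀ = QLᵀ + PLᵀ * diagIndicator L * Pᵀ := by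
    conv_lhs => rw [hsplitL]
    rw [transpose_add, transpose_mul, transpose_mul, transpose_diagIndicator, Matrix.mul_assoc]
  refine ⟨PLᵀ, impliedCov Λ Φ, QLᵀ * Φ * P, PR, ?_⟩
  calc impliedCov Λ Φ = Pᵀ * Φ * P := rfl
    _ = (QLᵀ + PLᵀ * diagIndicator L * Pᵀ) * Φ * P := by rw [← hPLt]
    _ = QLᵀ * Φ * P + PLᵀ * diagIndicator L * impliedCov Λ Φ := by
        rw [impliedCov]; noncomm_ring
    _ = QLᵀ * Φ * (QR + P * diagIndicator R * PR)
          + PLᵀ * diagIndicator L * impliedCov Λ Φ := by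
        rw [← hsplitR]
    _ = QLᵀ * Φ * QR + PLᵀ * diagIndicator L * impliedCov Λ Φ
          + QLᵀ * Φ * P * diagIndicator R * PR := by noncomm_ring

theorem avoidingPathSum_transpose_mul_mul_apply_eq_zero {n : ℕ} {E : Fin n → Fin n → Prop}
    (hacyc : EAcyclic E) {Λ Φ : Matrix (Fin n) (Fin n) ℝ} (hΛ : SupportedOn E Λ)
    (hΦ : Φ.IsDiag) {L R : Finset (Fin n)} {A B : Set (Fin n)} (hsep : DTSep E L R A B)
    {a b : Fin n} (ha : a ∈ A) (hb : b ∈ B) :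
    ((avoidingPathSum Λ L)ᵀ * Φ * avoidingPathSum Λ R) a b = 0 := by
  rw [← hΦ.diagonal_diag, mul_apply]
  refine sum_eq_zero fun t _ => ?_
  rw [mul_diagonal, transpose_apply]
  by_contra h
  obtain ⟨l₁, hl₁, rfl, hL⟩ := exists_isChain_of_avoidingPathSum_apply_ne_zero hacyc hΛ
    (left_ne_zero_of_mul (left_ne_zero_of_mul h))
  obtain ⟨l₂, hl₂, rfl, hR⟩ := exists_isChain_of_avoidingPathSum_apply_ne_zero hacyc hΛ
    (right_ne_zero_of_mul h)
  let τ : DTrek E :=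
    ⟨t :: l₁, t :: l₂, List.cons_ne_nil _ _, List.cons_ne_nil _ _, hl₁, hl₂, rfl⟩
  rcases hsep τ ha hb with ⟨v, hv, hvl⟩ | ⟨v, hv, hvr⟩
  · exact hL v hvl hv
  · exact hR v hvr hv

theorem rank_le_min_trek_separator_general
    {n : ℕ} (E : Fin n → Fin n → Prop) (hacyc : EAcyclic E)
    (Λ Φ : Matrix (Fin n) (Fin n) ℝ)
    (hΛ : SupportedOn E Λ) (hdiag : ∀ u v, u ≠ v → Φ u v = 0)
    (A B : Finset (Fin n)) :
    ∀ L R : Finset (Fin n), DTSep E L R ↑A ↑B →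
      ((impliedCov Λ Φ).submatrix
          (fun a : {a // a ∈ A} => (a : Fin n))
          (fun b : {b // b ∈ B} => (b : Fin n))).rank ≤ L.card + R.card := by
  intro L R hsep
  obtain ⟨X₁, Y₁, X₂, Y₂, hcov⟩ := impliedCov_eq_avoidingPathSum_add (Φ := Φ)
    (isNilpotent_of_acyclic hacyc hΛ).isUnit_one_sub
    (isUnit_one_sub_mul_diagIndicator_compl hacyc hΛ L)
    (isUnit_one_sub_mul_diagIndicator_compl hacyc hΛ R)
  refine rank_submatrix_le_card_add_card hcov ?_
  ext a b
  exact avoidingPathSum_transpose_mul_mul_apply_eq_zero hacyc hΛ hdiag hsep a.2 b.2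

/-- trek separation, inequality direction: for every parameter
assignment, the rank of `Σ[A, B]` is bounded by the size `|L| + |R|` of every
t-separator `(L, R)` of `A` and `B`, i.e. by the minimum such size. -/
theorem rank_le_min_trek_separator
    {n : ℕ} (E : Fin n → Fin n → Prop) (hacyc : EAcyclic E)
    (Λ Φ : Matrix (Fin n) (Fin n) ℝ)
    (hΛ : SupportedOn E Λ) (hdiag : ∀ u v, u ≠ v → Φ u v = 0)
    (hpos : ∀ u, 0 < Φ u u)
    (A B : Finset (Fin n)) :
    ∀ L R : Finset (Fin n), DTSep E L R ↑A ↑B →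
      ((impliedCov Λ Φ).submatrix
          (fun a : {a // a ∈ A} => (a : Fin n))
          (fun b : {b // b ∈ B} => (b : Fin n))).rank ≤ L.card + R.card :=
  rank_le_min_trek_separator_general E hacyc Λ Φ hΛ hdiag A B
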